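/- Bounded inverse theorem for PN-spaces: Let (V, ν) and (W, μ) be strongly complete Šerstnev PN-spaces under τ_M, and let T : V → W be a continuous linear bijection. Then T⁻¹ : W → V is continuous. -/

import Mathlib

open Filter Topology Set

noncomputable section

/-- A distance distribution function: nondecreasing, with values in `[0,1]`,
left-continuous, `F 0 = 0` and `sup F = 1`. -/
def IsDDF (F : ℝ → ℝ) : Prop :=
  Monotone F ∧ (∀ t, F t ∈ Set.Icc (0:ℝ) 1) ∧
  (∀ t : ℝ, Tendsto F (nhdsWithin t (Set.Iio t)) (nhds (F t))) ∧
  F 0 = 0 ∧ (⨆ t, F t) = 1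

/-- A proper d.f.: `F t → 1` as `t → ∞`. -/
def IsProper (F : ℝ → ℝ) : Prop := Tendsto F atTop (nhds 1)

/-- The unit step function at `0`. -/
def H0 : ℝ → ℝ := fun t => if 0 < t then 1 else 0

/-- The quantile function `F̂(w) = sup {t | F t < w}`, valued in `EReal`. -/
noncomputable def qhat (F : ℝ → ℝ) (w : ℝ) : EReal :=
  sSup ((fun t : ℝ => (t : EReal)) '' {t | F t < w})

/-- The triangle function `τ_M(F,G)(x) = sup_{s+t=x} min (F s) (G t)`. -/
noncomputable def tauM (F G : ℝ → ℝ) : ℝ → ℝ :=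
  fun x => ⨆ s : ℝ, min (F s) (G (x - s))

/-- A Šerstnev probabilistic normed space under `τ_M`, with all `ν_x` proper. -/
structure SPN (V : Type*) [AddCommGroup V] [Module ℝ V] where
  nu : V → ℝ → ℝ
  ddf : ∀ x, IsDDF (nu x)
  proper : ∀ x, IsProper (nu x)
  nu_eq_iff : ∀ x, nu x = H0 ↔ x = 0
  nu_add : ∀ x y t, tauM (nu x) (nu y) t ≤ nu (x + y) t
  nu_smul : ∀ a : ℝ, a ≠ 0 → ∀ x t, nu (a • x) t = nu x (t / |a|)

/-- The quantile seminorm `‖x‖_w = sup {t | ν_x t < w}`. -/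
noncomputable def pnorm {V : Type*} [AddCommGroup V] [Module ℝ V]
    (S : SPN V) (x : V) (w : ℝ) : ℝ :=
  sSup {t | S.nu x t < w}

/-- The strong topology of a PN-space, generated by the balls of the seminorms `‖·‖_w`. -/
def strongTop {V : Type*} [AddCommGroup V] [Module ℝ V] (S : SPN V) : TopologicalSpace V :=
  TopologicalSpace.generateFrom
    {U | ∃ (x : V) (w r : ℝ), w ∈ Set.Ioo (0:ℝ) 1 ∧ 0 < r ∧
      U = {y | pnorm S (y - x) w < r}}

/-- A strong Cauchy sequence. -/
def StrongCauchy {V : Type*} [AddCommGroup V] [Module ℝ V] (S : SPN V) (x : ℕ → V) : Prop :=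
  ∀ t : ℝ, 0 < t → ∃ N, ∀ m ≥ N, ∀ n ≥ N, 1 - t < S.nu (x n - x m) t

/-- Strong convergence of a sequence to a point. -/
def StrongLim {V : Type*} [AddCommGroup V] [Module ℝ V] (S : SPN V) (x : ℕ → V) (p : V) : Prop :=
  ∀ t : ℝ, 0 < t → ∃ N, ∀ n ≥ N, 1 - t < S.nu (x n - p) t

/-- Strong completeness: every strong Cauchy sequence strongly converges. -/
def StrongComplete {V : Type*} [AddCommGroup V] [Module ℝ V] (S : SPN V) : Prop :=
  ∀ x : ℕ → V, StrongCauchy S x → ∃ p, StrongLim S x p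


/-!
For `w ∈ (0, 1)` the quantile `‖·‖_w` is a seminorm: its triangle inequality is the `τ_M`
triangle inequality for `ν`. The strong topology is the topology of this family of seminorms, and
since `‖·‖_w` increases with `w`, countably many levels suffice; strong completeness is then
ordinary completeness. So `V` and `W` are Fréchet spaces and the theorem is the open mapping
theorem, proved in the usual two steps: Baire's theorem makes the closure of the image of every
neighbourhood of `0` a neighbourhood of `0`, and completeness of `V` removes the closure by
summing a series of successive approximations.
-/

open Function Pointwise Uniformity

section OpenMapping

variable {E F : Type*} [AddCommGroup E] [AddCommGroup F]

theorem LinearMap.closure_image_mem_nhds_zero_of_surjective {𝕜 : Type*} [NontriviallyNormedField 𝕜]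
    [Module 𝕜 E] [Module 𝕜 F] [TopologicalSpace E] [IsTopologicalAddGroup E]
    [ContinuousSMul 𝕜 E] [TopologicalSpace F] [IsTopologicalAddGroup F]
    [ContinuousConstSMul 𝕜 F] [BaireSpace F]
    (f : E →ₗ[𝕜] F) (hf : Surjective f) {U : Set E} (hU : U ∈ 𝓝 0) :
    closure (f '' U) ∈ 𝓝 0 := by
  obtain ⟨V, hV, hVU⟩ := exists_nhds_half_neg hU
  obtain ⟨c, hc⟩ := NormedField.exists_one_lt_norm 𝕜
  have hc0 : c ≠ 0 := norm_pos_iff.mp (one_pos.trans hc)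
  have hcover : ⋃ n : ℕ, closure (c ^ n • (f '' V)) = univ := by
    refine eq_univ_of_forall fun y => ?_
    obtain ⟨x, rfl⟩ := hf y
    have hpow : Tendsto (fun n : ℕ => c ^ n) atTop (Bornology.cobounded 𝕜) := by
      rw [← tendsto_norm_atTop_iff_cobounded]
      simpa using tendsto_pow_atTop_atTop_of_one_lt hc
    obtain ⟨n, hn⟩ := (hpow.eventually (absorbent_nhds_zero hV x)).exists
    refine mem_iUnion.2 ⟨n, subset_closure ?_⟩
    rw [← image_smul_set]
    exact mem_image_of_mem f (hn rfl)
  obtain ⟨n, hn⟩ := nonempty_interior_of_iUnion_of_closed (fun _ => isClosed_closure) hcover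
  rw [closure_smul₀' (pow_ne_zero n hc0), interior_smul₀ (pow_ne_zero n hc0)] at hn
  obtain ⟨_, y, hy, -⟩ := hn
  have hnhds : (· + y) ⁻¹' interior (closure (f '' V)) ∈ 𝓝 0 :=
    (continuous_add_const y).continuousAt.preimage_mem_nhds
      (by simpa using isOpen_interior.mem_nhds hy)
  refine mem_of_superset hnhds fun z hz => ?_
  have := map_mem_closure₂ (f := (· - ·)) (u := f '' U) continuous_sub (interior_subset hz)
    (interior_subset hy) ?_
  · simpa using this
  rintro _ ⟨v, hv, rfl⟩ _ ⟨v', hv', rfl⟩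
  exact ⟨v - v', hVU v hv v' hv', map_sub f v v'⟩

theorem exists_antitone_basis_nhds_zero_add_subset [TopologicalSpace E]
    [IsTopologicalAddGroup E] [(𝓝 (0 : E)).IsCountablyGenerated] {U : Set E} (hU : U ∈ 𝓝 0) :
    ∃ N : ℕ → Set E, (𝓝 (0 : E)).HasAntitoneBasis N ∧ N 0 ⊆ U ∧
      ∀ k, N (k + 1) + N (k + 1) ⊆ N k := by
  obtain ⟨B, hB⟩ := (𝓝 (0 : E)).exists_antitone_basis
  have hBU : (𝓝 (0 : E)).HasAntitoneBasis fun k => B k ∩ U :=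
    ⟨by simpa [inf_eq_left.2 (le_principal_iff.2 hU)] using hB.toHasBasis.inf_principal U,
      fun _ _ hkl => inter_subset_inter_left U (hB.antitone hkl)⟩
  obtain ⟨φ, -, hφ, hN⟩ := hBU.subbasis_with_rel (r := fun m n => B n ∩ U + (B n ∩ U) ⊆ B m ∩ U)
    fun m => by
      obtain ⟨V, hV, hVU⟩ := exists_nhds_zero_half (hBU.mem m)
      filter_upwards [hBU.eventually_subset hV] with n hn
      rintro _ ⟨a, ha, b, hb, rfl⟩
      exact hVU a (hn ha) b (hn hb)
  exact ⟨_, hN, inter_subset_right, fun k => hφ k.lt_succ_self⟩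

theorem sub_mem_of_add_subset {N : ℕ → Set E} (hN0 : ∀ k, (0 : E) ∈ N k)
    (hN : ∀ k, N (k + 1) + N (k + 1) ⊆ N k) {s : ℕ → E} (hs : ∀ k, s (k + 1) - s k ∈ N (k + 1))
    (m j : ℕ) : s (m + j) - s m ∈ N m := by
  induction j generalizing m with
  | zero => simpa using hN0 m
  | succ j ih =>
    convert hN m (add_mem_add (hs m) (ih (m + 1))) using 1
    rw [add_right_comm, add_assoc]
    abel

theorem Continuous.tendsto_closure_image_smallSets {ι X Y : Type*} [TopologicalSpace X]
    [TopologicalSpace Y] [RegularSpace Y] {f : X → Y} (hf : Continuous f) {l : Filter ι}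
    {x : X} {N : ι → Set X} (hN : Tendsto N l (𝓝 x).smallSets) :
    Tendsto (fun i => closure (f '' N i)) l (𝓝 (f x)).smallSets := by
  refine tendsto_smallSets_iff.2 fun W hW => ?_
  obtain ⟨W', ⟨hW', hW'c⟩, hW'W⟩ := (closed_nhds_basis (f x)).mem_iff.1 hW
  filter_upwards [tendsto_smallSets_iff.1 hN _ (hf.continuousAt.preimage_mem_nhds hW')]
    with i hi
  exact (closure_minimal (image_subset_iff.2 hi) hW'c).trans hW'W

theorem AddMonoidHom.exists_seq_sub_mem_closure_image [TopologicalSpace F]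
    [IsTopologicalAddGroup F] (f : E →+ F) {N : ℕ → Set E}
    (hN : ∀ k, closure (f '' N k) ∈ 𝓝 0) {y : F} (hy : y ∈ closure (f '' N 0)) :
    ∃ s : ℕ → E, s 0 = 0 ∧ (∀ k, s (k + 1) - s k ∈ N k) ∧
      ∀ k, y - f (s k) ∈ closure (f '' N k) := by
  have step : ∀ k, ∀ e ∈ closure (f '' N k), ∃ a ∈ N k, e - f a ∈ closure (f '' N (k + 1)) := by
    intro k e he
    have : {z | e - z ∈ closure (f '' N (k + 1))} ∈ 𝓝 e :=
      (continuous_const.sub continuous_id).continuousAt.preimage_mem_nhds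
        (by simpa using hN (k + 1))
    obtain ⟨_, hz, a, ha, rfl⟩ := mem_closure_iff_nhds.1 he _ this
    exact ⟨a, ha, hz⟩
  choose! a ha using step
  let s : ℕ → E := fun n => Nat.rec 0 (fun k sk => sk + a k (y - f sk)) n
  have hs_succ : ∀ k, s (k + 1) = s k + a k (y - f (s k)) := fun k => rfl
  have hs : ∀ k, y - f (s k) ∈ closure (f '' N k) := by
    intro k
    induction k with
    | zero => simpa [s] using hy
    | succ k ih =>
      rw [hs_succ, map_add, ← sub_sub]
      exact (ha k _ ih).2
  exact ⟨s, rfl, fun k => by rw [hs_succ, add_sub_cancel_left]; exact (ha k _ (hs k)).1, hs⟩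

theorem cauchySeq_of_sub_mem [UniformSpace E] [IsUniformAddGroup E] {N : ℕ → Set E}
    (hN : (𝓝 (0 : E)).HasAntitoneBasis N) {s : ℕ → E} (hs : ∀ m j, s (m + j) - s m ∈ N m) :
    CauchySeq s := by
  rw [cauchySeq_iff_tendsto, uniformity_eq_comap_nhds_zero, tendsto_comap_iff,
    hN.toHasBasis.tendsto_right_iff]
  intro K _
  obtain ⟨W, hW, hWK⟩ := exists_nhds_half_neg (hN.mem K)
  obtain ⟨j, hj⟩ := (hN.eventually_subset hW).exists
  have hjW : ∀ n ≥ j, s n - s j ∈ W := fun n hn =>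
    hj (by simpa [Nat.add_sub_cancel' hn] using hs j (n - j))
  refine eventually_atTop_prod_self'.2 ⟨j, fun m hm n hn => ?_⟩
  simpa using hWK _ (hjW n hn) _ (hjW m hm)

theorem AddMonoidHom.image_mem_nhds_zero_of_closure_image_mem_nhds_zero [UniformSpace E]
    [IsUniformAddGroup E] [CompleteSpace E] [(𝓝 (0 : E)).IsCountablyGenerated]
    [TopologicalSpace F] [IsTopologicalAddGroup F] [T2Space F]
    (f : E →+ F) (hf : Continuous f) (h : ∀ U ∈ 𝓝 (0 : E), closure (f '' U) ∈ 𝓝 0)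
    {U : Set E} (hU : U ∈ 𝓝 0) : f '' U ∈ 𝓝 0 := by
  obtain ⟨C, ⟨hC, hCc⟩, hCU⟩ := (closed_nhds_basis (0 : E)).mem_iff.1 hU
  obtain ⟨N, hN, hNC, hNadd⟩ := exists_antitone_basis_nhds_zero_add_subset hC
  refine mem_of_superset (h _ (hN.mem 1)) fun y hy => ?_
  obtain ⟨s, hs0, hds, hys⟩ :=
    f.exists_seq_sub_mem_closure_image (N := fun k => N (k + 1)) (fun k => h _ (hN.mem _)) hy
  have htail := sub_mem_of_add_subset (fun k => mem_of_mem_nhds (hN.mem k)) hNadd hds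
  obtain ⟨x, hx⟩ := cauchySeq_tendsto_of_complete (cauchySeq_of_sub_mem hN htail)
  have hxC : x ∈ C :=
    hCc.mem_of_tendsto hx (.of_forall fun n => hNC (by simpa [hs0] using htail 0 n))
  have hfs : Tendsto (fun k => f (s k)) atTop (𝓝 y) := by
    have := (hf.tendsto_closure_image_smallSets hN.tendsto_smallSets).comp
      (tendsto_add_atTop_nat 1) |>.of_smallSets (.of_forall hys)
    simpa using (tendsto_const_nhds (x := y)).sub this
  exact ⟨x, hCU hxC, tendsto_nhds_unique ((hf.tendsto x).comp hx) hfs⟩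

theorem LinearMap.isOpenMap_of_completeSpace {𝕜 : Type*} [NontriviallyNormedField 𝕜]
    [Module 𝕜 E] [Module 𝕜 F] [UniformSpace E] [IsUniformAddGroup E] [ContinuousSMul 𝕜 E]
    [CompleteSpace E] [(𝓤 E).IsCountablyGenerated] [UniformSpace F] [IsUniformAddGroup F]
    [ContinuousConstSMul 𝕜 F] [CompleteSpace F] [(𝓤 F).IsCountablyGenerated] [T2Space F]
    (f : E →ₗ[𝕜] F) (hf : Continuous f) (hsurj : Surjective f) : IsOpenMap f := by
  have himage : ∀ U ∈ 𝓝 (0 : E), f '' U ∈ 𝓝 0 := fun U hU =>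
    f.toAddMonoidHom.image_mem_nhds_zero_of_closure_image_mem_nhds_zero hf
      (fun _ hV => f.closure_image_mem_nhds_zero_of_surjective hsurj hV) hU
  refine IsOpenMap.of_nhds_le fun x S hS => ?_
  rw [← map_add_left_nhds_zero, mem_map, mem_map] at hS
  rw [← map_add_left_nhds_zero, mem_map]
  refine mem_of_superset (himage _ hS) ?_
  rintro _ ⟨v, hv, rfl⟩
  simpa using hv

end OpenMapping

namespace SPN

variable {V : Type*} [AddCommGroup V] [Module ℝ V] (S : SPN V)

theorem nu_nonneg (x : V) (t : ℝ) : 0 ≤ S.nu x t := ((S.ddf x).2.1 t).1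

theorem nu_le_one (x : V) (t : ℝ) : S.nu x t ≤ 1 := ((S.ddf x).2.1 t).2

theorem nu_mono (x : V) : Monotone (S.nu x) := (S.ddf x).1

theorem nu_zero (x : V) : S.nu x 0 = 0 := (S.ddf x).2.2.2.1

theorem nonempty_setOf_nu_lt (x : V) {w : ℝ} (hw : 0 < w) : {t | S.nu x t < w}.Nonempty :=
  ⟨0, by simpa [nu_zero] using hw⟩

theorem bddAbove_setOf_nu_lt (x : V) {w : ℝ} (hw : w < 1) : BddAbove {t | S.nu x t < w} := by
  obtain ⟨t₀, ht₀⟩ := eventually_atTop.1 ((S.proper x).eventually_const_lt hw)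
  exact ⟨t₀, fun t ht => le_of_not_ge fun h => (ht₀ t h).not_gt ht⟩

theorem le_pnorm {x : V} {w t : ℝ} (hw : w < 1) (h : S.nu x t < w) : t ≤ pnorm S x w :=
  le_csSup (S.bddAbove_setOf_nu_lt x hw) h

theorem le_nu_of_pnorm_lt {x : V} {w t : ℝ} (hw : w < 1) (h : pnorm S x w < t) :
    w ≤ S.nu x t :=
  le_of_not_gt fun h' => (S.le_pnorm hw h').not_gt h

theorem pnorm_le_of_le_nu {x : V} {w t : ℝ} (hw : 0 < w) (h : w ≤ S.nu x t) :
    pnorm S x w ≤ t :=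
  csSup_le (S.nonempty_setOf_nu_lt x hw) fun _ hs =>
    le_of_not_gt fun hts => (h.trans (S.nu_mono x hts.le)).not_gt hs

theorem pnorm_mono (x : V) {w w' : ℝ} (hw : 0 < w) (hww' : w ≤ w') (hw' : w' < 1) :
    pnorm S x w ≤ pnorm S x w' :=
  csSup_le_csSup (S.bddAbove_setOf_nu_lt x hw') (S.nonempty_setOf_nu_lt x hw)
    fun _ ht => lt_of_lt_of_le ht hww'

theorem pnorm_zero {w : ℝ} (hw : w ∈ Ioo (0 : ℝ) 1) : pnorm S (0 : V) w = 0 := by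
  have h0 : S.nu 0 = H0 := (S.nu_eq_iff 0).2 rfl
  have : {t | S.nu (0 : V) t < w} = Iic 0 := by
    ext t
    by_cases ht : 0 < t <;> simp [h0, H0, ht, hw.1, not_lt.2 hw.2.le, le_of_not_gt]
  rw [pnorm, this, csSup_Iic]

theorem pnorm_smul {a : ℝ} (ha : a ≠ 0) (x : V) {w : ℝ} (hw : w ∈ Ioo (0 : ℝ) 1) :
    pnorm S (a • x) w = |a| * pnorm S x w := by
  have ha' : 0 < |a| := abs_pos.2 ha
  have himage : {t | S.nu (a • x) t < w} = (|a| * ·) '' {t | S.nu x t < w} := by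
    ext t
    simp only [S.nu_smul a ha, mem_ofPred_eq, mem_image]
    exact ⟨fun h => ⟨t / |a|, h, mul_div_cancel₀ t ha'.ne'⟩,
      by rintro ⟨s, hs, rfl⟩; rwa [mul_div_cancel_left₀ _ ha'.ne']⟩
  rw [pnorm, himage, ← Monotone.map_csSup_of_continuousAt (by fun_prop)
    (fun _ _ h => mul_le_mul_of_nonneg_left h ha'.le) (S.nonempty_setOf_nu_lt x hw.1)
    (S.bddAbove_setOf_nu_lt x hw.2)]
  rfl

theorem pnorm_add_le (x y : V) {w : ℝ} (hw : w ∈ Ioo (0 : ℝ) 1) :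
    pnorm S (x + y) w ≤ pnorm S x w + pnorm S y w := by
  refine csSup_le (S.nonempty_setOf_nu_lt _ hw.1) fun u hu => le_of_not_gt fun hlt => ?_
  set s := (u + pnorm S x w - pnorm S y w) / 2 with hs
  have hx : w ≤ S.nu x s := S.le_nu_of_pnorm_lt hw.2 (by linarith [hs])
  have hy : w ≤ S.nu y (u - s) := S.le_nu_of_pnorm_lt hw.2 (by linarith [hs])
  have hbdd : BddAbove (range fun s' => min (S.nu x s') (S.nu y (u - s'))) :=
    ⟨1, by rintro _ ⟨s', rfl⟩; exact (min_le_left _ _).trans (S.nu_le_one x s')⟩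
  exact hu.not_ge ((le_min hx hy).trans ((le_ciSup hbdd s).trans (S.nu_add x y u)))

theorem exists_pnorm_ne_zero {x : V} (hx : x ≠ 0) : ∃ w ∈ Ioo (0 : ℝ) 1, pnorm S x w ≠ 0 := by
  obtain ⟨t, ht⟩ : ∃ t, S.nu x t ≠ H0 t := by
    by_contra! h
    exact hx ((S.nu_eq_iff x).1 (funext h))
  have ht0 : 0 < t := by
    by_contra! ht0
    have : S.nu x t = 0 := le_antisymm (S.nu_zero x ▸ S.nu_mono x ht0) (S.nu_nonneg x t)
    simp [this, H0, ht0.not_gt] at ht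
  have hlt : S.nu x t < 1 := (S.nu_le_one x t).lt_of_ne (by simpa [H0, ht0] using ht)
  refine ⟨(S.nu x t + 1) / 2, ⟨by linarith [S.nu_nonneg x t], by linarith⟩, ?_⟩
  exact (ht0.trans_le (S.le_pnorm (by linarith) (by linarith))).ne'

def seminormFamily : SeminormFamily ℝ V (Ioo (0 : ℝ) 1) := fun w =>
  Seminorm.of (pnorm S · w) (fun x y => S.pnorm_add_le x y w.2) fun a x => by
    rcases eq_or_ne a 0 with rfl | ha
    · simp [S.pnorm_zero w.2]
    · rw [S.pnorm_smul ha x w.2, Real.norm_eq_abs]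

@[simp]
theorem seminormFamily_apply (w : Ioo (0 : ℝ) 1) (x : V) :
    S.seminormFamily w x = pnorm S x w :=
  rfl

theorem seminormFamily_mono : Monotone S.seminormFamily := fun w w' h x =>
  S.pnorm_mono x w.2.1 h w'.2.2

theorem withSeminorms : WithSeminorms (topology := strongTop S) S.seminormFamily := by
  let _ : TopologicalSpace V := S.seminormFamily.moduleFilterBasis.topology
  have hp : WithSeminorms S.seminormFamily := ⟨rfl⟩
  have := hp.topologicalAddGroup
  refine .mk (topology := strongTop S) (le_antisymm (le_of_nhds_le_nhds fun x => ?_)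
    (le_generateFrom ?_))
  · rw [hp.hasBasis_ball.ge_iff]
    rintro ⟨s, r⟩ hr
    have : Nonempty (Ioo (0 : ℝ) 1) := ⟨⟨1 / 2, by norm_num, by norm_num⟩⟩
    obtain ⟨w, hw⟩ := s.exists_le
    refine mem_of_superset (@IsOpen.mem_nhds V (strongTop S) _ _
      (TopologicalSpace.isOpen_generateFrom_of_mem ⟨x, w, r, w.2, hr, rfl⟩)
      (by simpa [S.pnorm_zero w.2] using hr)) fun y hy => ?_
    rw [Seminorm.mem_ball]
    exact (Finset.sup_le fun i hi => S.seminormFamily_mono (hw i hi)) (y - x) |>.trans_lt hy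
  · rintro _ ⟨x, w, r, hw, hr, rfl⟩
    exact isOpen_lt ((hp.continuous_seminorm ⟨w, hw⟩).comp (continuous_sub_right x))
      continuous_const

theorem firstCountableTopology : @FirstCountableTopology V (strongTop S) := by
  let _ : TopologicalSpace V := strongTop S
  obtain ⟨u, -, hu, hlim⟩ := exists_seq_strictMono_tendsto' (zero_lt_one' ℝ)
  refine (S.withSeminorms.congr (q := fun n => S.seminormFamily ⟨u n, hu n⟩) ?_ ?_)
    |>.firstCountableTopology
  · intro n
    exact ⟨{⟨u n, hu n⟩}, 1, by simp⟩
  · intro w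
    obtain ⟨n, hn⟩ := (hlim.eventually (lt_mem_nhds w.2.2)).exists
    exact ⟨{n}, 1, by simpa using S.seminormFamily_mono (show w ≤ ⟨u n, hu n⟩ from hn.le)⟩

theorem t2Space : @T2Space V (strongTop S) := by
  let _ : TopologicalSpace V := strongTop S
  have := S.withSeminorms.topologicalAddGroup
  have := S.withSeminorms.T1_of_separating fun x hx => by
    obtain ⟨w, hw, hne⟩ := S.exists_pnorm_ne_zero hx
    exact ⟨⟨w, hw⟩, hne⟩
  infer_instance

theorem completeSpace [UniformSpace V] [IsUniformAddGroup V] [(𝓤 V).IsCountablyGenerated]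
    (hp : WithSeminorms S.seminormFamily) (hS : StrongComplete S) : CompleteSpace V := by
  refine UniformSpace.complete_of_cauchySeq_tendsto fun u hu => ?_
  rw [cauchySeq_iff_tendsto, uniformity_eq_comap_nhds_zero, tendsto_comap_iff,
    hp.tendsto_nhds] at hu
  obtain ⟨x, hx⟩ := hS u fun t ht => by
    let w : Ioo (0 : ℝ) 1 := ⟨max (1 / 2) (1 - t / 2), by positivity,
      max_lt (by norm_num) (by linarith)⟩
    obtain ⟨N, hN⟩ := eventually_atTop_prod_self'.1 (hu w t ht)
    refine ⟨N, fun m hm n hn => ?_⟩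
    have := S.le_nu_of_pnorm_lt w.2.2 (by simpa using hN m hm n hn)
    linarith [le_max_right (1 / 2) (1 - t / 2)]
  refine ⟨x, (hp.tendsto_nhds_atTop u x).2 fun w ε hε => ?_⟩
  obtain ⟨N, hN⟩ := hx (min (ε / 2) (1 - w)) (lt_min (by linarith) (by linarith [w.2.2]))
  refine ⟨N, fun n hn => ?_⟩
  have := S.pnorm_le_of_le_nu w.2.1 ((le_sub_comm.1 (min_le_right _ _)).trans (hN n hn).le)
  simp only [seminormFamily_apply]
  linarith [min_le_left (ε / 2) (1 - w)]

end SPN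

/-- Bounded inverse theorem for PN-spaces: the inverse of a continuous linear bijection
between strongly complete Šerstnev PN-spaces is continuous. -/
theorem spn_bounded_inverse {V W : Type*} [AddCommGroup V] [Module ℝ V]
    [AddCommGroup W] [Module ℝ W]
    (S : SPN V) (S' : SPN W) (hV : StrongComplete S) (hW : StrongComplete S')
    (T : V →ₗ[ℝ] W) (hbij : Function.Bijective T)
    (hTc : @Continuous V W (strongTop S) (strongTop S') T) :
    @Continuous W V (strongTop S') (strongTop S) (Equiv.ofBijective T hbij).symm := by
  let _ : TopologicalSpace V := strongTop S
  let _ : TopologicalSpace W := strongTop S'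
  have hpV := S.withSeminorms
  have hpW := S'.withSeminorms
  have := hpV.topologicalAddGroup
  have := hpW.topologicalAddGroup
  have := hpV.continuousSMul
  have := hpW.continuousSMul
  have := S.firstCountableTopology
  have := S'.firstCountableTopology
  have := S'.t2Space
  let _ : UniformSpace V := IsTopologicalAddGroup.rightUniformSpace V
  let _ : UniformSpace W := IsTopologicalAddGroup.rightUniformSpace W
  have := isUniformAddGroup_of_addCommGroup (G := V)
  have := isUniformAddGroup_of_addCommGroup (G := W)
  have := IsUniformAddGroup.uniformity_countably_generated (α := V)
  have := IsUniformAddGroup.uniformity_countably_generated (α := W)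
  have := S.completeSpace hpV hV
  have := S'.completeSpace hpW hW
  exact ((Equiv.ofBijective T hbij).toHomeomorphOfContinuousOpen hTc
    (T.isOpenMap_of_completeSpace hTc hbij.2)).symm.continuous
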